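/- arXiv:1806.06865 — 3 statements merged into one kernel-verified Lean document; each statement's English description precedes it below -/
import Mathlib

section
/- For every x ∈ ℝ³, ∫_0^1 ∫_{ℝ³} (2πσ)^{−3/2} e^{−‖y−x‖²/(2σ)} ‖y‖^{−3/2} dy dσ ≤ 4 · 2^{1/4} π^{−1/2} Γ(3/4); in particular sup_{x∈ℝ³} ∫_0^1 ∫_{ℝ³} (2πσ)^{−3/2} e^{−‖y−x‖²/(2σ)} ‖y‖^{−3/2} dy dσ < ∞. (This expresses the finiteness of sup_x E^{P_x}[∫_0^1 ‖ω(s)‖^{−3/2} ds] for three-dimensional Brownian motion started at x.) -/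
open MeasureTheory Real Set Module

/-!
Subordination: for `y ≠ 0`, `‖y‖ ^ (-s) = Γ(s/2)⁻¹ ∫₀^∞ t ^ (s/2 - 1) e^{-t‖y‖²} dt`. After
exchanging the integrals, the heat kernel integrated against the Gaussian `e^{-t‖y‖²}` is again a
Gaussian in `x` (complete the square), hence at most its value `(1 + 2σt) ^ (-n/2)` at `x = 0`.
The remaining `t`-integral is a Beta integral, so
`∫ p_σ(x, y) ‖y‖ ^ (-s) dy ≤ Γ((n - s)/2) / Γ(n/2) · (2σ) ^ (-s/2)`. For `n = 3`, `s = 3/2` this is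
`2^{1/4} π^{-1/2} Γ(3/4) σ^{-3/4}`, and `∫₀¹ σ^{-3/4} dσ = 4`.
-/

lemma lintegral_rpow_mul_exp_neg_mul_Ioi {a r : ℝ} (ha : 0 < a) (hr : 0 < r) :
    ∫⁻ t in Ioi 0, ENNReal.ofReal (t ^ (a - 1) * exp (-(r * t)))
      = ENNReal.ofReal (r ^ (-a) * Gamma a) := by
  have hint : IntegrableOn (fun t : ℝ ↦ t ^ (a - 1) * exp (-(r * t))) (Ioi 0) := by
    refine .of_integral_ne_zero ?_
    rw [integral_rpow_mul_exp_neg_mul_Ioi ha hr]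
    positivity
  rw [← ofReal_integral_eq_lintegral_ofReal hint
    ((ae_restrict_iff' measurableSet_Ioi).2 (.of_forall fun t (ht : 0 < t) ↦ by positivity)),
    integral_rpow_mul_exp_neg_mul_Ioi ha hr, one_div, inv_rpow hr.le, rpow_neg hr.le]

lemma ofReal_rpow_neg_eq_lintegral {a r : ℝ} (ha : 0 < a) (hr : 0 < r) :
    ENNReal.ofReal (r ^ (-a)) = ENNReal.ofReal (Gamma a)⁻¹ *
      ∫⁻ t in Ioi 0, ENNReal.ofReal (t ^ (a - 1) * exp (-(r * t))) := by
  rw [lintegral_rpow_mul_exp_neg_mul_Ioi ha hr, ← ENNReal.ofReal_mul (by positivity)]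
  congr 1
  field_simp [(Gamma_pos_of_pos ha).ne']

lemma lintegral_rpow_mul_one_add_mul_rpow_neg {a b c : ℝ} (ha : 0 < a) (hb : 0 < b)
    (hac : a < c) :
    ∫⁻ t in Ioi 0, ENNReal.ofReal (t ^ (a - 1) * (1 + b * t) ^ (-c))
      = ENNReal.ofReal (Gamma a * Gamma (c - a) / Gamma c * b ^ (-a)) := by
  have hc : 0 < c := ha.trans hac
  have hca : 0 < c - a := sub_pos.2 hac
  calc ∫⁻ t in Ioi 0, ENNReal.ofReal (t ^ (a - 1) * (1 + b * t) ^ (-c))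
      = ∫⁻ t in Ioi 0, ∫⁻ s in Ioi 0, ENNReal.ofReal (t ^ (a - 1)) * (ENNReal.ofReal (Gamma c)⁻¹ *
          ENNReal.ofReal (s ^ (c - 1) * exp (-((1 + b * t) * s)))) := by
        refine setLIntegral_congr_fun measurableSet_Ioi fun t (ht : 0 < t) ↦ ?_
        rw [lintegral_const_mul' _ _ ENNReal.ofReal_ne_top,
          lintegral_const_mul' _ _ ENNReal.ofReal_ne_top,
          ← ofReal_rpow_neg_eq_lintegral hc (by positivity), ← ENNReal.ofReal_mul (by positivity)]
    _ = ∫⁻ s in Ioi 0, ∫⁻ t in Ioi 0, ENNReal.ofReal (t ^ (a - 1)) * (ENNReal.ofReal (Gamma c)⁻¹ *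
          ENNReal.ofReal (s ^ (c - 1) * exp (-((1 + b * t) * s)))) :=
        lintegral_lintegral_swap (by fun_prop)
    _ = ∫⁻ s in Ioi 0, ENNReal.ofReal ((Gamma c)⁻¹ * (Gamma a * b ^ (-a))) *
          ENNReal.ofReal (s ^ (c - a - 1) * exp (-(1 * s))) := by
        refine setLIntegral_congr_fun measurableSet_Ioi fun s (hs : 0 < s) ↦ ?_
        calc _ = ∫⁻ t in Ioi 0, ENNReal.ofReal ((Gamma c)⁻¹ * s ^ (c - 1) * exp (-s)) *
              ENNReal.ofReal (t ^ (a - 1) * exp (-((b * s) * t))) := by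
              refine setLIntegral_congr_fun measurableSet_Ioi fun t (ht : 0 < t) ↦ ?_
              rw [← ENNReal.ofReal_mul (by positivity), ← ENNReal.ofReal_mul (by positivity),
                ← ENNReal.ofReal_mul (by positivity)]
              congr 1
              rw [show -((1 + b * t) * s) = -s + -(b * s * t) by ring, exp_add]
              ring
          _ = _ := by
              rw [lintegral_const_mul' _ _ ENNReal.ofReal_ne_top,
                lintegral_rpow_mul_exp_neg_mul_Ioi ha (by positivity),
                ← ENNReal.ofReal_mul (by positivity), ← ENNReal.ofReal_mul (by positivity)]
              congr 1
              rw [mul_rpow hb.le hs.le, one_mul, sub_right_comm, sub_eq_add_neg (c - 1),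
                rpow_add hs]
              ring
    _ = _ := by
        rw [lintegral_const_mul' _ _ ENNReal.ofReal_ne_top,
          lintegral_rpow_mul_exp_neg_mul_Ioi hca one_pos, ← ENNReal.ofReal_mul (by positivity)]
        congr 1
        rw [one_rpow]
        ring

variable {V : Type*} [NormedAddCommGroup V] [InnerProductSpace ℝ V]

lemma mul_norm_sub_sq_add_mul_norm_sq {a b : ℝ} (hab : a + b ≠ 0) (x y : V) :
    a * ‖y - x‖ ^ 2 + b * ‖y‖ ^ 2
      = (a + b) * ‖y - (a / (a + b)) • x‖ ^ 2 + a * b / (a + b) * ‖x‖ ^ 2 := by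
  rw [norm_sub_sq_real, norm_sub_sq_real, real_inner_smul_right, norm_smul, mul_pow,
    Real.norm_eq_abs, sq_abs]
  field_simp
  ring

variable [FiniteDimensional ℝ V] [MeasurableSpace V] [BorelSpace V]

lemma integral_exp_neg_mul_norm_sub_sq_add_mul_norm_sq {a b : ℝ} (hab : 0 < a + b) (x : V) :
    ∫ y, exp (-(a * ‖y - x‖ ^ 2 + b * ‖y‖ ^ 2))
      = (π / (a + b)) ^ (finrank ℝ V / 2 : ℝ) * exp (-(a * b / (a + b) * ‖x‖ ^ 2)) := by
  simp_rw [mul_norm_sub_sq_add_mul_norm_sq hab.ne', neg_add, exp_add, ← neg_mul]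
  rw [integral_mul_const, integral_sub_right_eq_self (fun y ↦ exp (-(a + b) * ‖y‖ ^ 2)),
    GaussianFourier.integral_rexp_neg_mul_sq_norm hab]

noncomputable def heatKernel (σ : ℝ) (x y : V) : ℝ :=
  (2 * π * σ) ^ (-(finrank ℝ V : ℝ) / 2) * exp (-‖y - x‖ ^ 2 / (2 * σ))

lemma integral_heatKernel_mul_exp_neg_mul_sq_norm {σ t : ℝ} (hσ : 0 < σ) (ht : 0 ≤ t) (x : V) :
    ∫ y, heatKernel σ x y * exp (-(t * ‖y‖ ^ 2))
      = (1 + 2 * σ * t) ^ (-(finrank ℝ V : ℝ) / 2) * exp (-(t / (1 + 2 * σ * t) * ‖x‖ ^ 2)) := by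
  have hpos : 0 < (2 * σ)⁻¹ + t := by positivity
  have h : ∀ y, heatKernel σ x y * exp (-(t * ‖y‖ ^ 2))
      = (2 * π * σ) ^ (-(finrank ℝ V : ℝ) / 2) *
          exp (-((2 * σ)⁻¹ * ‖y - x‖ ^ 2 + t * ‖y‖ ^ 2)) := by
    intro y
    rw [heatKernel, mul_assoc, ← exp_add]
    congr 2
    field_simp
    ring
  simp_rw [h]
  rw [integral_const_mul, integral_exp_neg_mul_norm_sub_sq_add_mul_norm_sq hpos]
  have e1 : π / ((2 * σ)⁻¹ + t) = (2 * π * σ) / (1 + 2 * σ * t) := by field_simp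
  have e2 : (2 * σ)⁻¹ * t / ((2 * σ)⁻¹ + t) = t / (1 + 2 * σ * t) := by field_simp
  rw [e1, e2, div_rpow (by positivity) (by positivity), neg_div, rpow_neg (by positivity),
    rpow_neg (by positivity)]
  field_simp

lemma lintegral_heatKernel_mul_exp_neg_mul_sq_norm_le {σ t : ℝ} (hσ : 0 < σ) (ht : 0 ≤ t) (x : V) :
    ∫⁻ y, ENNReal.ofReal (heatKernel σ x y * exp (-(t * ‖y‖ ^ 2)))
      ≤ ENNReal.ofReal ((1 + 2 * σ * t) ^ (-(finrank ℝ V : ℝ) / 2)) := by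
  have hval := integral_heatKernel_mul_exp_neg_mul_sq_norm hσ ht x
  rw [← ofReal_integral_eq_lintegral_ofReal (.of_integral_ne_zero (by rw [hval]; positivity))
    (.of_forall fun y ↦ by unfold heatKernel; positivity), hval]
  refine ENNReal.ofReal_le_ofReal (mul_le_of_le_one_right (by positivity) ?_)
  rw [exp_le_one_iff, neg_nonpos]
  positivity

theorem integral_heatKernel_mul_norm_rpow_neg_le {σ s : ℝ} (hσ : 0 < σ) (hs : 0 < s)
    (hsn : s < finrank ℝ V) (x : V) :
    ∫ y, heatKernel σ x y * ‖y‖ ^ (-s)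
      ≤ Gamma ((finrank ℝ V - s) / 2) / Gamma (finrank ℝ V / 2) * (2 * σ) ^ (-(s / 2)) := by
  have : Nontrivial V := Module.nontrivial_of_finrank_pos (R := ℝ) (by exact_mod_cast hs.trans hsn)
  have hα : 0 < s / 2 := by positivity
  have hK : ∀ y, 0 ≤ heatKernel σ x y := fun y ↦ by unfold heatKernel; positivity
  rw [integral_eq_lintegral_of_nonneg_ae (.of_forall fun y ↦ mul_nonneg (hK y) (by positivity))
    (by unfold heatKernel; fun_prop)]
  refine ENNReal.toReal_le_of_le_ofReal (by positivity) ?_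
  calc ∫⁻ y, ENNReal.ofReal (heatKernel σ x y * ‖y‖ ^ (-s))
      = ∫⁻ y, ENNReal.ofReal (Gamma (s / 2))⁻¹ * ∫⁻ t in Ioi 0, ENNReal.ofReal (t ^ (s / 2 - 1)) *
          ENNReal.ofReal (heatKernel σ x y * exp (-(t * ‖y‖ ^ 2))) := by
        refine lintegral_congr_ae ((volume : Measure V).ae_ne 0 |>.mono fun y hy ↦ ?_)
        have hy2 : 0 < ‖y‖ ^ 2 := by positivity
        dsimp only
        rw [show ‖y‖ ^ (-s) = (‖y‖ ^ 2) ^ (-(s / 2)) by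
            rw [← rpow_natCast, ← rpow_mul (norm_nonneg y)]; ring_nf,
          ENNReal.ofReal_mul (hK y), ofReal_rpow_neg_eq_lintegral hα hy2, mul_left_comm,
          ← lintegral_const_mul' _ _ ENNReal.ofReal_ne_top]
        congr 1
        refine setLIntegral_congr_fun measurableSet_Ioi fun t (ht : 0 < t) ↦ ?_
        rw [← ENNReal.ofReal_mul (hK y), ← ENNReal.ofReal_mul (by positivity)]
        ring_nf
    _ = ENNReal.ofReal (Gamma (s / 2))⁻¹ * ∫⁻ t in Ioi 0, ENNReal.ofReal (t ^ (s / 2 - 1)) *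
          ∫⁻ y, ENNReal.ofReal (heatKernel σ x y * exp (-(t * ‖y‖ ^ 2))) := by
        rw [lintegral_const_mul' _ _ ENNReal.ofReal_ne_top,
          lintegral_lintegral_swap (by unfold heatKernel; fun_prop)]
        simp_rw [lintegral_const_mul' _ _ ENNReal.ofReal_ne_top]
    _ ≤ ENNReal.ofReal (Gamma (s / 2))⁻¹ * ∫⁻ t in Ioi 0,
          ENNReal.ofReal (t ^ (s / 2 - 1) * (1 + 2 * σ * t) ^ (-(finrank ℝ V : ℝ) / 2)) := by
        gcongr _ * ?_
        refine setLIntegral_mono' measurableSet_Ioi fun t (ht : 0 < t) ↦ ?_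
        rw [ENNReal.ofReal_mul (by positivity)]
        gcongr
        exact lintegral_heatKernel_mul_exp_neg_mul_sq_norm_le hσ ht.le x
    _ = _ := by
        rw [neg_div, lintegral_rpow_mul_one_add_mul_rpow_neg hα (by positivity) (by linarith),
          ← ENNReal.ofReal_mul (by positivity)]
        congr 1
        rw [← sub_div]
        field_simp [(Gamma_pos_of_pos hα).ne']

lemma Real.Gamma_three_div_two : Gamma (3 / 2) = √π / 2 := by
  rw [show (3 / 2 : ℝ) = 1 / 2 + 1 by norm_num, Gamma_add_one (by norm_num), Gamma_one_half_eq]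
  ring

lemma integral_Ioc_zero_one_rpow {r : ℝ} (hr : -1 < r) :
    ∫ σ in Ioc (0 : ℝ) 1, σ ^ r = 1 / (r + 1) := by
  rw [← intervalIntegral.integral_of_le zero_le_one, integral_rpow (.inl hr), one_rpow,
    zero_rpow (by linarith)]
  ring

lemma integrableOn_Ioc_zero_one_rpow {r : ℝ} (hr : -1 < r) :
    IntegrableOn (fun σ : ℝ ↦ σ ^ r) (Ioc 0 1) :=
  (intervalIntegrable_iff_integrableOn_Ioc_of_le zero_le_one).1
    (intervalIntegral.intervalIntegrable_rpow' hr)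

lemma integral_heatKernel_mul_norm_rpow_neg_three_div_two_le {σ : ℝ} (hσ : 0 < σ)
    (x : EuclideanSpace ℝ (Fin 3)) :
    ∫ y : EuclideanSpace ℝ (Fin 3),
        (2 * π * σ) ^ (-(3 : ℝ) / 2) * exp (-‖y - x‖ ^ 2 / (2 * σ)) * ‖y‖ ^ (-(3 : ℝ) / 2)
      ≤ 2 ^ ((1 : ℝ) / 4) * π ^ (-(1 : ℝ) / 2) * Gamma (3 / 4) * σ ^ (-(3 / 4 : ℝ)) := by
  have h := integral_heatKernel_mul_norm_rpow_neg_le hσ (s := 3 / 2) (by norm_num)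
    (by rw [finrank_euclideanSpace_fin]; norm_num) x
  simp only [heatKernel, finrank_euclideanSpace_fin, Nat.cast_ofNat] at h
  rw [← neg_div] at h
  refine h.trans_eq ?_
  rw [Gamma_three_div_two, sqrt_eq_rpow, mul_rpow zero_le_two hσ.le]
  norm_num
  have h2 : (2 : ℝ) ^ (1 / 4 : ℝ) = 2 * 2 ^ (-(3 / 4) : ℝ) := by
    rw [← rpow_one_add' zero_le_two (by norm_num)]
    norm_num
  rw [h2, rpow_neg pi_pos.le]
  field_simp

/-- Uniform bound in the starting point `x` for the expected time integral over `[0,1]` of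
`‖ω(s)‖^{-3/2}` along three-dimensional Brownian motion started at `x`, expressed through the
Gaussian heat kernel; in particular the supremum over `x` is finite. -/
theorem brownian_expected_inverse_norm_integral_bounded :
    (∀ x : EuclideanSpace ℝ (Fin 3),
      (∫ σ in Set.Ioc (0 : ℝ) 1, ∫ y : EuclideanSpace ℝ (Fin 3),
          (2 * Real.pi * σ) ^ (-(3 : ℝ) / 2) * Real.exp (-‖y - x‖ ^ 2 / (2 * σ)) *
            ‖y‖ ^ (-(3 : ℝ) / 2))
        ≤ 4 * ((2 : ℝ) ^ ((1 : ℝ) / 4) * Real.pi ^ (-(1 : ℝ) / 2) * Real.Gamma (3 / 4))) ∧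
    BddAbove (Set.range fun x : EuclideanSpace ℝ (Fin 3) =>
      ∫ σ in Set.Ioc (0 : ℝ) 1, ∫ y : EuclideanSpace ℝ (Fin 3),
          (2 * Real.pi * σ) ^ (-(3 : ℝ) / 2) * Real.exp (-‖y - x‖ ^ 2 / (2 * σ)) *
            ‖y‖ ^ (-(3 : ℝ) / 2)) := by
  have hbound : ∀ x : EuclideanSpace ℝ (Fin 3),
      (∫ σ in Ioc (0 : ℝ) 1, ∫ y : EuclideanSpace ℝ (Fin 3),
          (2 * π * σ) ^ (-(3 : ℝ) / 2) * exp (-‖y - x‖ ^ 2 / (2 * σ)) * ‖y‖ ^ (-(3 : ℝ) / 2))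
        ≤ 4 * (2 ^ ((1 : ℝ) / 4) * π ^ (-(1 : ℝ) / 2) * Gamma (3 / 4)) := by
    intro x
    have hr : -1 < -(3 / 4 : ℝ) := by norm_num
    calc _ ≤ ∫ σ in Ioc (0 : ℝ) 1,
            2 ^ ((1 : ℝ) / 4) * π ^ (-(1 : ℝ) / 2) * Gamma (3 / 4) * σ ^ (-(3 / 4 : ℝ)) :=
          integral_mono_of_nonneg
            ((ae_restrict_iff' measurableSet_Ioc).2 (.of_forall fun σ hσ ↦
              integral_nonneg fun y ↦ by have := hσ.1; positivity))
            ((integrableOn_Ioc_zero_one_rpow hr).const_mul _)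
            ((ae_restrict_iff' measurableSet_Ioc).2 (.of_forall fun σ hσ ↦
              integral_heatKernel_mul_norm_rpow_neg_three_div_two_le hσ.1 x))
      _ = _ := by
          rw [integral_const_mul, integral_Ioc_zero_one_rpow hr]
          norm_num
          ring
  exact ⟨hbound, ⟨_, forall_mem_range.2 hbound⟩⟩
end

section
/- Let X be a Polish space, d ≥ 1, and let ν be a Borel probability measure on X. Suppose (μ_n) is a sequence of Borel probability measures on X × ℝ^d, each with X-marginal equal to ν, and suppose μ_n converges wea-guely to a finite Borel measure μ on X × ℝ^d. Then the X-marginal of μ is dominated by ν, i.e. μ(A × ℝ^d) ≤ ν(A) for every Borel set A ⊆ X. -/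
/-!
Test the wea-gue convergence against `f x * χₙ a`, where `f ≥ 0` is bounded continuous on `X`
and `χₙ` is a bump equal to `1` on the ball of radius `n + 1`: since every `μₖ` has `X`-marginal
`ν`, this gives `∫ f(x) χₙ(a) dμ ≤ ∫ f dν`. Letting `n → ∞` by dominated convergence, the
`X`-marginal `π` of `μ` satisfies `∫ f dπ ≤ ∫ f dν`. Approximating indicators of closed sets from
above by such `f` gives `π F ≤ ν F` for closed `F`, and inner regularity of the finite measure `π`
on the metrizable space `X` extends this to all Borel sets.
-/

open MeasureTheory Filter Topology BoundedContinuousFunction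

open scoped NNReal

section Bump

variable {E : Type*} [NormedAddCommGroup E] [NormedSpace ℝ E] [HasContDiffBump E]

noncomputable def growingBump (n : ℕ) : E → ℝ :=
  (⟨n + 1, n + 2, by positivity, by linarith⟩ : ContDiffBump (0 : E))

theorem continuous_growingBump (n : ℕ) : Continuous (growingBump n : E → ℝ) :=
  ContDiffBump.continuous _

theorem growingBump_nonneg (n : ℕ) (a : E) : 0 ≤ growingBump n a := ContDiffBump.nonneg _

theorem growingBump_le_one (n : ℕ) (a : E) : growingBump n a ≤ 1 := ContDiffBump.le_one _

theorem abs_mul_growingBump_le (c : ℝ) (n : ℕ) (a : E) : |c * growingBump n a| ≤ |c| := by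
  rw [abs_mul, abs_of_nonneg (growingBump_nonneg n a)]
  exact mul_le_of_le_one_right (abs_nonneg c) (growingBump_le_one n a)

theorem growingBump_eq_zero {n : ℕ} {a : E} (ha : (n : ℝ) + 2 ≤ ‖a‖) : growingBump n a = 0 :=
  ContDiffBump.zero_of_le_dist _ (by simpa using ha)

theorem tendsto_growingBump (a : E) : Tendsto (fun n ↦ growingBump n a) atTop (𝓝 1) := by
  refine tendsto_const_nhds.congr' ?_
  filter_upwards [eventually_ge_atTop ⌈‖a‖⌉₊] with n hn
  have : ‖a‖ ≤ n := (Nat.le_ceil _).trans (Nat.cast_le.mpr hn)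
  exact (ContDiffBump.one_of_mem_closedBall _ (by simp; linarith)).symm

theorem tendsto_integral_mul_growingBump {X : Type*} [MeasurableSpace X] [MeasurableSpace E]
    [OpensMeasurableSpace E] {μ : Measure (X × E)} {g : X → ℝ}
    (hg : Integrable g (μ.map Prod.fst)) :
    Tendsto (fun n ↦ ∫ p, g p.1 * growingBump n p.2 ∂μ) atTop
      (𝓝 (∫ x, g x ∂μ.map Prod.fst)) := by
  have hg_fst : Integrable (fun p : X × E ↦ g p.1) μ := hg.comp_measurable measurable_fst
  rw [integral_map measurable_fst.aemeasurable hg.aestronglyMeasurable]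
  exact tendsto_integral_of_dominated_convergence _
    (fun n ↦ hg_fst.aestronglyMeasurable.mul
      ((continuous_growingBump n).measurable.comp measurable_snd).aestronglyMeasurable)
    hg_fst.norm (fun n ↦ ae_of_all _ fun p ↦ abs_mul_growingBump_le _ n p.2)
    (ae_of_all _ fun p ↦ by simpa using (tendsto_growingBump p.2).const_mul (g p.1))

end Bump

theorem MeasureTheory.Measure.le_of_forall_lintegral_le {Ω : Type*} [MeasurableSpace Ω]
    [TopologicalSpace Ω] [HasOuterApproxClosed Ω] [BorelSpace Ω] {μ ν : Measure Ω}
    [IsFiniteMeasure μ] [IsFiniteMeasure ν] [μ.WeaklyRegular]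
    (h : ∀ f : Ω →ᵇ ℝ≥0, ∫⁻ x, f x ∂μ ≤ ∫⁻ x, f x ∂ν) : μ ≤ ν := by
  have closed_le : ∀ F, IsClosed F → μ F ≤ ν F := fun F hF ↦
    le_of_tendsto_of_tendsto' (HasOuterApproxClosed.tendsto_lintegral_apprSeq hF μ)
      (HasOuterApproxClosed.tendsto_lintegral_apprSeq hF ν) fun n ↦ h _
  refine Measure.le_iff.2 fun A hA ↦ ?_
  rw [hA.measure_eq_iSup_isClosed_of_ne_top (measure_ne_top μ A)]
  exact iSup₂_le fun F hFA ↦ iSup_le fun hF ↦ (closed_le F hF).trans (measure_mono hFA)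

section Weague

variable {X E : Type*} [TopologicalSpace X] [MeasurableSpace X] [NormedAddCommGroup E]
  [MeasurableSpace E]

def TendstoWeague (μn : ℕ → Measure (X × E)) (μ : Measure (X × E)) : Prop :=
  ∀ F : X × E → ℝ, Continuous F → (∃ M : ℝ, ∀ p, |F p| ≤ M) →
    (∀ δ : ℝ, 0 < δ → ∃ R : ℝ, ∀ (x : X) (a : E), R ≤ ‖a‖ → |F (x, a)| ≤ δ) →
    Tendsto (fun n ↦ ∫ p, F p ∂(μn n)) atTop (𝓝 (∫ p, F p ∂μ))

variable [OpensMeasurableSpace X] [NormedSpace ℝ E] [HasContDiffBump E] [BorelSpace E]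

theorem integral_mul_growingBump_le_integral_map_fst (μ : Measure (X × E)) [IsFiniteMeasure μ]
    (f : X →ᵇ ℝ≥0) (n : ℕ) :
    ∫ p, f p.1 * growingBump n p.2 ∂μ ≤ ∫ x, (f x : ℝ) ∂μ.map Prod.fst := by
  have hf_fst : Integrable (fun p : X × E ↦ (f p.1 : ℝ)) μ :=
    (integrable_of_nnreal _ f).comp_measurable measurable_fst
  rw [integral_map measurable_fst.aemeasurable
    f.continuous.measurable.coe_nnreal_real.aestronglyMeasurable]
  refine integral_mono (hf_fst.mono ?_ (ae_of_all _ fun p ↦ abs_mul_growingBump_le _ n p.2))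
    hf_fst fun p ↦ mul_le_of_le_one_right (f p.1).coe_nonneg (growingBump_le_one n p.2)
  exact hf_fst.aestronglyMeasurable.mul
    ((continuous_growingBump n).measurable.comp measurable_snd).aestronglyMeasurable

theorem TendstoWeague.lintegral_map_fst_le {μn : ℕ → Measure (X × E)} {μ : Measure (X × E)}
    [IsFiniteMeasure μ] {ν : Measure X} [IsFiniteMeasure ν] (h : TendstoWeague μn μ)
    (hmarg : ∀ n, (μn n).map Prod.fst = ν) (f : X →ᵇ ℝ≥0) :
    ∫⁻ x, f x ∂μ.map Prod.fst ≤ ∫⁻ x, f x ∂ν := by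
  rw [← ENNReal.toReal_le_toReal (lintegral_lt_top_of_nnreal _ f).ne
    (lintegral_lt_top_of_nnreal _ f).ne, toReal_lintegral_coe_eq_integral,
    toReal_lintegral_coe_eq_integral]
  obtain ⟨M, hM⟩ := f.isBounded_range.bddAbove
  set F : ℕ → X × E → ℝ := fun n p ↦ f p.1 * growingBump n p.2
  have hF_cont n : Continuous (F n) :=
    (NNReal.continuous_coe.comp (f.continuous.comp continuous_fst)).mul
      ((continuous_growingBump n).comp continuous_snd)
  have hF_bdd n p : |F n p| ≤ M := (abs_mul_growingBump_le _ n p.2).trans <| by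
    simpa using hM (Set.mem_range_self p.1)
  have hF_decay n δ (hδ : 0 < δ) : ∃ R : ℝ, ∀ (x : X) (a : E), R ≤ ‖a‖ → |F n (x, a)| ≤ δ :=
    ⟨n + 2, fun x a ha ↦ by simp [F, growingBump_eq_zero ha, hδ.le]⟩
  have hF_le_marg n k : ∫ p, F n p ∂(μn k) ≤ ∫ x, (f x : ℝ) ∂ν := by
    have : IsFiniteMeasure ((μn k).map Prod.fst) := hmarg k ▸ inferInstance
    have : IsFiniteMeasure (μn k) := Measure.isFiniteMeasure_of_map measurable_fst.aemeasurable
    simpa [hmarg k] using integral_mul_growingBump_le_integral_map_fst (μn k) f n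
  have hF_le_lim n : ∫ p, F n p ∂μ ≤ ∫ x, (f x : ℝ) ∂ν :=
    le_of_tendsto' (h (F n) (hF_cont n) ⟨M, hF_bdd n⟩ (hF_decay n)) (hF_le_marg n)
  exact le_of_tendsto' (tendsto_integral_mul_growingBump (integrable_of_nnreal _ f)) hF_le_lim

end Weague

theorem weague_limit_marginal_dominated_general (X : Type*) [TopologicalSpace X] [PolishSpace X]
    [MeasurableSpace X] [BorelSpace X] (d : ℕ)
    (ν : Measure X) [IsProbabilityMeasure ν]
    (μn : ℕ → Measure (X × EuclideanSpace ℝ (Fin d)))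
    (hmarg : ∀ n, (μn n).map Prod.fst = ν)
    (μ : Measure (X × EuclideanSpace ℝ (Fin d))) [IsFiniteMeasure μ]
    (hconv : ∀ F : X × EuclideanSpace ℝ (Fin d) → ℝ, Continuous F →
      (∃ M : ℝ, ∀ p, |F p| ≤ M) →
      (∀ δ : ℝ, 0 < δ → ∃ R : ℝ, ∀ (x : X) (a : EuclideanSpace ℝ (Fin d)),
        R ≤ ‖a‖ → |F (x, a)| ≤ δ) →
      Filter.Tendsto (fun n => ∫ p, F p ∂(μn n)) atTop (𝓝 (∫ p, F p ∂μ))) :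
    ∀ A : Set X, MeasurableSet A →
      μ (A ×ˢ (Set.univ : Set (EuclideanSpace ℝ (Fin d)))) ≤ ν A := by
  have hle : μ.map Prod.fst ≤ ν :=
    Measure.le_of_forall_lintegral_le (TendstoWeague.lintegral_map_fst_le hconv hmarg)
  intro A hA
  rw [Set.prod_univ, ← Measure.map_apply measurable_fst hA]
  exact hle A

/-- If probability measures `μ_n` on `X × ℝ^d` all have `X`-marginal `ν` and converge
wea-guely to a finite measure `μ`, then the `X`-marginal of `μ` is dominated by `ν`. -/
theorem weague_limit_marginal_dominated (X : Type*) [TopologicalSpace X] [PolishSpace X]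
    [MeasurableSpace X] [BorelSpace X] (d : ℕ) (hd : 1 ≤ d)
    (ν : Measure X) [IsProbabilityMeasure ν]
    (μn : ℕ → Measure (X × EuclideanSpace ℝ (Fin d)))
    (hprob : ∀ n, IsProbabilityMeasure (μn n))
    (hmarg : ∀ n, (μn n).map Prod.fst = ν)
    (μ : Measure (X × EuclideanSpace ℝ (Fin d))) [IsFiniteMeasure μ]
    (hconv : ∀ F : X × EuclideanSpace ℝ (Fin d) → ℝ, Continuous F →
      (∃ M : ℝ, ∀ p, |F p| ≤ M) →
      (∀ δ : ℝ, 0 < δ → ∃ R : ℝ, ∀ (x : X) (a : EuclideanSpace ℝ (Fin d)),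
        R ≤ ‖a‖ → |F (x, a)| ≤ δ) →
      Filter.Tendsto (fun n => ∫ p, F p ∂(μn n)) atTop (𝓝 (∫ p, F p ∂μ))) :
    ∀ A : Set X, MeasurableSet A →
      μ (A ×ˢ (Set.univ : Set (EuclideanSpace ℝ (Fin d)))) ≤ ν A :=
  weague_limit_marginal_dominated_general X d ν μn hmarg μ hconv
end

section
/- Let (B_t)_{t∈[0,1]} be a standard one-dimensional Brownian motion with almost surely continuous paths, and define the 1/4-Hölder seminorm ‖ω*‖ = sup_{0 ≤ s < t ≤ 1} |B_t − B_s| / (t − s)^{1/4}. Then there exist constants C₁, C₂ ∈ (0, ∞) such that P(‖ω*‖ > λ) ≤ C₁ exp(−λ²/(2C₂)) for all λ > 0, and consequently E[exp(‖ω*‖)] < ∞. -/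
open MeasureTheory ProbabilityTheory Real

noncomputable def quarterHolderSeminorm (g : ℝ → ℝ) : ℝ :=
  ⨆ p : {p : ℝ × ℝ // 0 ≤ p.1 ∧ p.1 < p.2 ∧ p.2 ≤ 1},
    |g p.1.2 - g p.1.1| / (p.1.2 - p.1.1) ^ ((1 : ℝ) / 4)

/-!
Lévy's chaining argument. If every level-`n` dyadic increment of a continuous path on `[0,1]` is
at most `c (3/4)^n`, then comparing `s < t` through their dyadic truncations at the level `m`
where `t - s ≈ 2^{-m}` bounds `|g t - g s|` by a geometric tail `O(c (3/4)^m)`, which is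
`O(c (t - s)^{1/4})` because `3/4 ≤ 2^{-1/4}`.

A level-`n` increment of `B` is `N(0, 2^{-n})`, so it exceeds `c (3/4)^n` with probability at
most `2 exp(-c² (9/8)^n / 2)`. By Bernoulli's inequality the union bound over the `2^n`
increments of every level is then a geometric series once `c` is large, of sum `O(exp(-c²/2))`;
with `c = λ / (7·2^{1/4})` this is the Gaussian tail, and summing the tail over integer levels
gives `E[exp ‖ω*‖] < ∞`.

The seminorm is a supremum over uncountably many pairs and need not be measurable, so its
super-level sets are controlled through measurable supersets.
-/

open Set Filter Topology
open scoped NNReal ENNReal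

def DyadicIncrementsLE (g : ℝ → ℝ) (δ : ℕ → ℝ) : Prop :=
  ∀ n k : ℕ, k < 2 ^ n → |g ((k + 1) / 2 ^ n) - g (k / 2 ^ n)| ≤ δ n

noncomputable def dyadicFloor (n : ℕ) (t : ℝ) : ℝ := ⌊t * 2 ^ n⌋₊ / 2 ^ n

lemma floor_mul_two_pow_le {t : ℝ} (ht : t ≤ 1) (n : ℕ) : ⌊t * 2 ^ n⌋₊ ≤ 2 ^ n :=
  Nat.floor_le_of_le <| by
    simpa using mul_le_of_le_one_left (by positivity : (0 : ℝ) ≤ 2 ^ n) ht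

lemma two_mul_floor_mul_two_pow_le {t : ℝ} (ht : 0 ≤ t) (n : ℕ) :
    2 * ⌊t * 2 ^ n⌋₊ ≤ ⌊t * 2 ^ (n + 1)⌋₊ := by
  rw [Nat.le_floor_iff (by positivity), pow_succ, ← mul_assoc, mul_comm _ (2 : ℝ)]
  push_cast
  exact mul_le_mul_of_nonneg_left (Nat.floor_le (by positivity)) zero_le_two

lemma floor_mul_two_pow_succ_le {t : ℝ} (ht : 0 ≤ t) (n : ℕ) :
    ⌊t * 2 ^ (n + 1)⌋₊ ≤ 2 * ⌊t * 2 ^ n⌋₊ + 1 := by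
  rw [← Nat.lt_succ_iff, Nat.floor_lt (by positivity), pow_succ]
  push_cast
  linarith [Nat.lt_floor_add_one (t * 2 ^ n)]

lemma floor_mul_le_floor_mul_add_one {s t x : ℝ} (hs : 0 ≤ s) (hx : 0 ≤ x)
    (hst : t - s ≤ 1 / x) :
    ⌊t * x⌋₊ ≤ ⌊s * x⌋₊ + 1 := by
  rw [← Nat.floor_add_one (by positivity)]
  apply Nat.floor_mono
  rcases hx.eq_or_lt with rfl | hx
  · simp
  · rw [le_div_iff₀ hx] at hst
    linarith

lemma tendsto_dyadicFloor {t : ℝ} (ht : 0 ≤ t) : Tendsto (dyadicFloor · t) atTop (𝓝 t) :=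
  (tendsto_nat_floor_mul_div_atTop ht).comp (tendsto_pow_atTop_atTop_of_one_lt one_lt_two)

lemma dyadicFloor_mem_Icc {t : ℝ} (ht : t ∈ Icc (0 : ℝ) 1) (n : ℕ) :
    dyadicFloor n t ∈ Icc 0 1 := by
  refine ⟨by unfold dyadicFloor; positivity, ?_⟩
  rw [dyadicFloor, div_le_one (by positivity)]
  exact_mod_cast floor_mul_two_pow_le ht.2 n

namespace DyadicIncrementsLE

variable {g : ℝ → ℝ} {δ : ℕ → ℝ}

lemma nonneg (h : DyadicIncrementsLE g δ) (n : ℕ) : 0 ≤ δ n :=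
  (abs_nonneg _).trans (h n 0 (by positivity))

lemma abs_sub_le_of_le_succ (h : DyadicIncrementsLE g δ) {n j k : ℕ} (hkj : k ≤ j)
    (hjk : j ≤ k + 1) (hj : j ≤ 2 ^ n) : |g (j / 2 ^ n) - g (k / 2 ^ n)| ≤ δ n := by
  obtain rfl | rfl : j = k ∨ j = k + 1 := by omega
  · simpa using h.nonneg n
  · exact_mod_cast h n k (by omega)

lemma abs_dyadicFloor_succ_sub_le (h : DyadicIncrementsLE g δ) {t : ℝ}
    (ht : t ∈ Icc (0 : ℝ) 1) (n : ℕ) :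
    |g (dyadicFloor (n + 1) t) - g (dyadicFloor n t)| ≤ δ (n + 1) := by
  have hrefine : dyadicFloor n t = ((2 * ⌊t * 2 ^ n⌋₊ : ℕ) : ℝ) / 2 ^ (n + 1) := by
    rw [dyadicFloor, pow_succ]; push_cast; field_simp
  rw [hrefine]
  exact h.abs_sub_le_of_le_succ (two_mul_floor_mul_two_pow_le ht.1 n)
    (floor_mul_two_pow_succ_le ht.1 n) (floor_mul_two_pow_le ht.2 _)

lemma abs_sub_dyadicFloor_le (h : DyadicIncrementsLE g δ) (hδ : Summable δ)
    (hg : ContinuousOn g (Icc 0 1)) {t : ℝ} (ht : t ∈ Icc (0 : ℝ) 1) (m : ℕ) :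
    |g t - g (dyadicFloor m t)| ≤ ∑' i, δ (m + 1 + i) := by
  have hpartial : ∀ N, |g (dyadicFloor (m + N) t) - g (dyadicFloor m t)|
      ≤ ∑ i ∈ Finset.range N, δ (m + 1 + i) := by
    intro N
    induction N with
    | zero => simp
    | succ N ih =>
      rw [Finset.sum_range_succ, ← add_assoc]
      refine (abs_sub_le _ (g (dyadicFloor (m + N) t)) _).trans ?_
      have hstep := h.abs_dyadicFloor_succ_sub_le ht (m + N)
      rw [show m + 1 + N = m + N + 1 by omega]
      linarith
  have hsum : Summable fun i ↦ δ (m + 1 + i) :=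
    hδ.comp_injective (add_right_injective (m + 1))
  have hlim : Tendsto (fun N ↦ g (dyadicFloor (m + N) t)) atTop (𝓝 (g t)) :=
    (hg t ht).tendsto.comp <| tendsto_nhdsWithin_iff.2
      ⟨(tendsto_dyadicFloor ht.1).comp (tendsto_atTop_mono (Nat.le_add_left · m) tendsto_id),
        Eventually.of_forall fun N ↦ dyadicFloor_mem_Icc ht _⟩
  exact le_of_tendsto' ((hlim.sub tendsto_const_nhds).abs) fun N ↦
    (hpartial N).trans (hsum.sum_le_tsum _ fun i _ ↦ h.nonneg _)

lemma abs_sub_le_tsum (h : DyadicIncrementsLE g δ) (hδ : Summable δ)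
    (hg : ContinuousOn g (Icc 0 1)) {s t : ℝ} (hs : 0 ≤ s) (hst : s ≤ t) (ht : t ≤ 1) {m : ℕ}
    (hm : t - s ≤ 1 / 2 ^ m) :
    |g t - g s| ≤ δ m + 2 * ∑' i, δ (m + 1 + i) := by
  have hs' : s ∈ Icc (0 : ℝ) 1 := ⟨hs, hst.trans ht⟩
  have ht' : t ∈ Icc (0 : ℝ) 1 := ⟨hs.trans hst, ht⟩
  have hmid : |g (dyadicFloor m t) - g (dyadicFloor m s)| ≤ δ m :=
    h.abs_sub_le_of_le_succ (Nat.floor_mono (by gcongr))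
      (floor_mul_le_floor_mul_add_one hs (by positivity) hm) (floor_mul_two_pow_le ht m)
  have htail_t := h.abs_sub_dyadicFloor_le hδ hg ht' m
  have htail_s := h.abs_sub_dyadicFloor_le hδ hg hs' m
  have h₁ := abs_sub_le (g t) (g (dyadicFloor m t)) (g s)
  have h₂ := abs_sub_le (g (dyadicFloor m t)) (g (dyadicFloor m s)) (g s)
  rw [abs_sub_comm] at htail_s
  linarith

lemma abs_sub_le_rpow {c r γ : ℝ} (h : DyadicIncrementsLE g fun n ↦ c * r ^ n)
    (hg : ContinuousOn g (Icc 0 1)) (hr₀ : 0 ≤ r) (hr₁ : r < 1) (hγ : 0 ≤ γ)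
    (hrγ : r ≤ 2 ^ (-γ)) {s t : ℝ} (hs : 0 ≤ s) (hst : s < t) (ht : t ≤ 1) :
    |g t - g s| ≤ 2 ^ γ * ((1 + r) / (1 - r)) * c * (t - s) ^ γ := by
  have hc : 0 ≤ c := by simpa using h.nonneg 0
  have hts : 0 < t - s := sub_pos.2 hst
  obtain ⟨m, hm_le, hm_lt⟩ :=
    exists_nat_pow_near (one_le_one_div hts (by linarith)) one_lt_two
  have hm : t - s ≤ 1 / 2 ^ m := (le_one_div hts (by positivity)).2 hm_le
  have hδ : Summable fun n ↦ c * r ^ n := (summable_geometric_of_lt_one hr₀ hr₁).mul_left c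
  have htsum : ∑' i, c * r ^ (m + 1 + i) = c * r ^ m * (r / (1 - r)) := by
    simp_rw [pow_add, ← mul_assoc]
    rw [tsum_mul_left, tsum_geometric_of_lt_one hr₀ hr₁]
    ring
  have hscale : r ^ m ≤ 2 ^ γ * (t - s) ^ γ := by
    have hdyadic : 1 / 2 ^ m ≤ 2 * (t - s) := by
      have hlt := (one_div_lt hts (by positivity)).1 hm_lt
      have : (1 : ℝ) / 2 ^ m = 2 * (1 / 2 ^ (m + 1)) := by rw [pow_succ]; field_simp
      linarith
    calc r ^ m ≤ (2 ^ (-γ)) ^ m := pow_le_pow_left₀ hr₀ hrγ m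
      _ = (1 / 2 ^ m) ^ γ := by
        rw [← Real.rpow_natCast, ← Real.rpow_mul zero_le_two, one_div, ← Real.rpow_natCast,
          Real.inv_rpow (by positivity), ← Real.rpow_mul zero_le_two,
          ← Real.rpow_neg zero_le_two]
        ring_nf
      _ ≤ (2 * (t - s)) ^ γ := Real.rpow_le_rpow (by positivity) hdyadic hγ
      _ = 2 ^ γ * (t - s) ^ γ := Real.mul_rpow zero_le_two hts.le
  have hr : 0 < 1 - r := sub_pos.2 hr₁
  calc |g t - g s| ≤ c * r ^ m + 2 * (c * r ^ m * (r / (1 - r))) := by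
        simpa [htsum] using h.abs_sub_le_tsum hδ hg hs hst.le ht hm
    _ = (1 + r) / (1 - r) * c * r ^ m := by field_simp; ring
    _ ≤ (1 + r) / (1 - r) * c * (2 ^ γ * (t - s) ^ γ) := by gcongr
    _ = 2 ^ γ * ((1 + r) / (1 - r)) * c * (t - s) ^ γ := by ring

end DyadicIncrementsLE

lemma quarterHolderSeminorm_le {g : ℝ → ℝ} {K : ℝ} (hK : 0 ≤ K)
    (h : ∀ s t, 0 ≤ s → s < t → t ≤ 1 → |g t - g s| ≤ K * (t - s) ^ (1 / 4 : ℝ)) :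
    quarterHolderSeminorm g ≤ K := by
  refine Real.iSup_le (fun ⟨⟨s, t⟩, hs, hst, ht⟩ ↦ ?_) hK
  rw [div_le_iff₀ (Real.rpow_pos_of_pos (sub_pos.2 hst) _)]
  exact h s t hs hst ht

lemma DyadicIncrementsLE.quarterHolderSeminorm_le {g : ℝ → ℝ} {c : ℝ}
    (h : DyadicIncrementsLE g fun n ↦ c * (3 / 4) ^ n) (hg : ContinuousOn g (Icc 0 1)) :
    quarterHolderSeminorm g ≤ 2 ^ (1 / 4 : ℝ) * 7 * c := by
  have hr : (3 / 4 : ℝ) ≤ 2 ^ (-(1 / 4 : ℝ)) := by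
    rw [show -(1 / 4 : ℝ) = (-4)⁻¹ by norm_num,
      Real.le_rpow_inv_iff_of_neg (by norm_num) (by norm_num) (by norm_num),
      show (-4 : ℝ) = ((-4 : ℤ) : ℝ) by norm_num, Real.rpow_intCast]
    norm_num
  have hc : 0 ≤ c := by simpa using h.nonneg 0
  refine _root_.quarterHolderSeminorm_le (by positivity) fun s t hs hst ht ↦ ?_
  convert h.abs_sub_le_rpow hg (by norm_num) (by norm_num) (by norm_num) hr hs hst ht using 2
  norm_num

lemma hasSubgaussianMGF_id_gaussianReal (v : ℝ≥0) :
    HasSubgaussianMGF id v (gaussianReal 0 v) where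
  integrable_exp_mul := integrable_exp_mul_gaussianReal
  mgf_le t := by simp [mgf_id_gaussianReal]

lemma gaussianReal_abs_ge_le (v : ℝ≥0) {ε : ℝ} (hε : 0 ≤ ε) :
    gaussianReal 0 v {x | ε ≤ |x|} ≤ ENNReal.ofReal (2 * exp (-ε ^ 2 / (2 * v))) := by
  have hX := hasSubgaussianMGF_id_gaussianReal v
  have hsplit : {x : ℝ | ε ≤ |x|} = {x | ε ≤ id x} ∪ {x | ε ≤ (-id) x} := by
    ext x; simp [le_abs]
  rw [hsplit, two_mul, ENNReal.ofReal_add (by positivity) (by positivity)]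
  refine (measure_union_le _ _).trans (add_le_add ?_ ?_) <;> rw [← ofReal_measureReal] <;>
    apply ENNReal.ofReal_le_ofReal
  exacts [hX.measure_ge_le hε, hX.neg.measure_ge_le hε]

lemma two_pow_succ_mul_exp_le {q x : ℝ} (hq : 1 ≤ q) (hx : log 4 ≤ x * (q - 1) / 2)
    (n : ℕ) :
    2 ^ (n + 1) * exp (-(x * q ^ n) / 2) ≤ 2 * exp (-x / 2) * (1 / 2) ^ n := by
  have hx₀ : 0 ≤ x := by nlinarith [Real.log_pos (by norm_num : (1 : ℝ) < 4)]
  have hbernoulli : 1 + n * (q - 1) ≤ q ^ n := by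
    simpa using one_add_mul_le_pow (by linarith : -2 ≤ q - 1) n
  have hquarter : (1 / 4 : ℝ) ^ n = exp (-(n * log 4)) := by
    rw [exp_neg, exp_nat_mul, exp_log (by norm_num), one_div, inv_pow]
  have hexp : exp (-(x * q ^ n) / 2) ≤ exp (-x / 2) * (1 / 4) ^ n := by
    rw [hquarter, ← exp_add, exp_le_exp]
    nlinarith [mul_le_mul_of_nonneg_left hbernoulli hx₀,
      mul_le_mul_of_nonneg_left hx (Nat.cast_nonneg (α := ℝ) n)]
  calc 2 ^ (n + 1) * exp (-(x * q ^ n) / 2)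
      ≤ 2 ^ (n + 1) * (exp (-x / 2) * (1 / 4) ^ n) := by gcongr
    _ = 2 * exp (-x / 2) * (1 / 2) ^ n := by
        have hcancel : (2 : ℝ) ^ n * (1 / 2) ^ n = 1 := by rw [← mul_pow]; norm_num
        rw [show (1 / 4 : ℝ) = 1 / 2 * (1 / 2) by norm_num, mul_pow, pow_succ]
        linear_combination (2 * exp (-x / 2) * (1 / 2) ^ n) * hcancel

lemma tsum_ofReal_two_pow_succ_mul_exp_le {q x : ℝ} (hq : 1 ≤ q)
    (hx : log 4 ≤ x * (q - 1) / 2) :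
    ∑' n : ℕ, ENNReal.ofReal (2 ^ (n + 1) * exp (-(x * q ^ n) / 2))
      ≤ ENNReal.ofReal (4 * exp (-x / 2)) := by
  calc ∑' n : ℕ, ENNReal.ofReal (2 ^ (n + 1) * exp (-(x * q ^ n) / 2))
      ≤ ∑' n : ℕ, ENNReal.ofReal (2 * exp (-x / 2)) * 2⁻¹ ^ n := by
        refine ENNReal.tsum_le_tsum fun n ↦ ?_
        rw [← ENNReal.ofReal_ofNat 2, ← ENNReal.ofReal_inv_of_pos two_pos,
          ← ENNReal.ofReal_pow (by norm_num), ← ENNReal.ofReal_mul (by positivity)]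
        simpa using ENNReal.ofReal_le_ofReal (two_pow_succ_mul_exp_le hq hx n)
    _ = ENNReal.ofReal (4 * exp (-x / 2)) := by
        rw [ENNReal.tsum_mul_left, ENNReal.tsum_geometric, ENNReal.one_sub_inv_two, inv_inv,
          ← ENNReal.ofReal_ofNat 2, ← ENNReal.ofReal_mul (by positivity)]
        ring_nf

lemma ofReal_exp_le_add_tsum_indicator {Ω : Type*} {X : Ω → ℝ} {U : ℕ → Set Ω}
    (hU : ∀ m : ℕ, {ω | (m : ℝ) + 1 < X ω} ⊆ U m) (ω : Ω) :
    ENNReal.ofReal (exp (X ω)) ≤ ENNReal.ofReal (exp 1) +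
      ∑' m : ℕ, (U m).indicator (fun _ ↦ ENNReal.ofReal (exp (m + 2))) ω := by
  rcases le_or_gt (X ω) 1 with hX | hX
  · exact le_add_right (ENNReal.ofReal_le_ofReal (exp_le_exp.2 hX))
  set m := ⌈X ω⌉₊ - 2
  have hceil : 2 ≤ ⌈X ω⌉₊ := Nat.lt_ceil.2 (by exact_mod_cast hX)
  have hm : (m : ℝ) = ⌈X ω⌉₊ - 2 := by push_cast [m, hceil]; ring
  have hlow : (m : ℝ) + 1 < X ω := by linarith [Nat.ceil_lt_add_one (by linarith : 0 ≤ X ω)]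
  have hupp : X ω ≤ (m : ℝ) + 2 := by linarith [Nat.le_ceil (X ω)]
  calc ENNReal.ofReal (exp (X ω)) ≤ ENNReal.ofReal (exp (m + 2)) :=
        ENNReal.ofReal_le_ofReal (exp_le_exp.2 hupp)
    _ = (U m).indicator (fun _ ↦ ENNReal.ofReal (exp (m + 2))) ω :=
        (indicator_of_mem (hU m hlow) fun _ ↦ ENNReal.ofReal (exp (m + 2))).symm
    _ ≤ _ := (ENNReal.le_tsum (f := fun k : ℕ ↦
          (U k).indicator (fun _ ↦ ENNReal.ofReal (exp (k + 2))) ω) m).trans le_add_self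

lemma summable_exp_add_two_mul_exp_neg_sq {C : ℝ} (hC : 0 < C) :
    Summable fun m : ℕ ↦ exp (m + 2) * exp (-(m + 1 : ℝ) ^ 2 / (2 * C)) := by
  refine Summable.of_nonneg_of_le (fun m ↦ by positivity) (fun m ↦ ?_)
    (summable_exp_neg_nat.mul_left (exp (2 * C + 1)))
  rw [← exp_add, ← exp_add, exp_le_exp]
  have hquad : 2 * (m + 1 : ℝ) - 2 * C ≤ (m + 1) ^ 2 / (2 * C) := by
    rw [le_div_iff₀ (by positivity)]
    nlinarith [sq_nonneg ((m : ℝ) + 1 - 2 * C)]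
  rw [neg_div]
  linarith

section GaussianIncrements

variable {Ω : Type*} [MeasurableSpace Ω] {P : Measure Ω} {B : ℝ → Ω → ℝ}

def HasStandardGaussianIncrements (B : ℝ → Ω → ℝ) (P : Measure Ω) : Prop :=
  ∀ s t : ℝ, 0 ≤ s → s ≤ t → t ≤ 1 →
    P.map (fun ω ↦ B t ω - B s ω) = gaussianReal 0 (t - s).toNNReal

namespace HasStandardGaussianIncrements

lemma measure_abs_sub_ge_le (hB : HasStandardGaussianIncrements B P) {s t ε : ℝ} (hs : 0 ≤ s)
    (hst : s ≤ t) (ht : t ≤ 1) (hε : 0 ≤ ε) :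
    P {ω | ε ≤ |B t ω - B s ω|} ≤ ENNReal.ofReal (2 * exp (-ε ^ 2 / (2 * (t - s)))) := by
  have hmap := hB s t hs hst ht
  -- `Measure.map` along a function that is not a.e.-measurable is `0`, which no Gaussian law is.
  have hae : AEMeasurable (fun ω ↦ B t ω - B s ω) P :=
    .of_map_ne_zero (hmap ▸ IsProbabilityMeasure.ne_zero _)
  calc P {ω | ε ≤ |B t ω - B s ω|} ≤ P.map (fun ω ↦ B t ω - B s ω) {x | ε ≤ |x|} :=
        Measure.le_map_apply hae _
    _ ≤ _ := by
        simpa [hmap, Real.coe_toNNReal _ (sub_nonneg.2 hst)] using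
          gaussianReal_abs_ge_le (t - s).toNNReal hε

lemma measure_not_dyadicIncrementsLE_le (hB : HasStandardGaussianIncrements B P) {δ : ℕ → ℝ}
    (hδ : ∀ n, 0 ≤ δ n) :
    P {ω | ¬ DyadicIncrementsLE (B · ω) δ}
      ≤ ∑' n : ℕ, ENNReal.ofReal (2 ^ (n + 1) * exp (-(δ n ^ 2 * 2 ^ n) / 2)) := by
  have hsub : {ω | ¬ DyadicIncrementsLE (B · ω) δ} ⊆
      ⋃ n, ⋃ k ∈ Finset.range (2 ^ n),
        {ω | δ n ≤ |B ((k + 1) / 2 ^ n) ω - B (k / 2 ^ n) ω|} := by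
    intro ω hω
    simp only [DyadicIncrementsLE, mem_ofPred_eq, not_forall, not_le] at hω
    obtain ⟨n, k, hk, hlt⟩ := hω
    simp only [mem_iUnion, Finset.mem_range]
    exact ⟨n, k, hk, hlt.le⟩
  refine (measure_mono hsub).trans
    ((measure_iUnion_le _).trans (ENNReal.tsum_le_tsum fun n ↦ ?_))
  have hk : ∀ k ∈ Finset.range (2 ^ n),
      P {ω | δ n ≤ |B ((k + 1) / 2 ^ n) ω - B (k / 2 ^ n) ω|}
        ≤ ENNReal.ofReal (2 * exp (-(δ n ^ 2 * 2 ^ n) / 2)) := by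
    intro k hk
    have hk' : (k : ℝ) + 1 ≤ 2 ^ n := by exact_mod_cast Finset.mem_range.1 hk
    convert hB.measure_abs_sub_ge_le (s := k / 2 ^ n) (t := (k + 1) / 2 ^ n) (by positivity)
      (by gcongr; linarith) (div_le_one_of_le₀ hk' (by positivity)) (hδ n) using 4
    field_simp
    ring
  refine (measure_biUnion_finset_le _ _).trans ((Finset.sum_le_card_nsmul _ _ _ hk).trans ?_)
  rw [Finset.card_range, nsmul_eq_mul, ← ENNReal.ofReal_natCast,
    ← ENNReal.ofReal_mul (by positivity)]
  refine ENNReal.ofReal_le_ofReal (le_of_eq ?_)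
  push_cast
  ring

lemma measure_not_dyadicIncrementsLE_geometric_le [IsProbabilityMeasure P]
    (hB : HasStandardGaussianIncrements B P) {c : ℝ} (hc : 0 ≤ c) :
    P {ω | ¬ DyadicIncrementsLE (B · ω) fun n ↦ c * (3 / 4) ^ n}
      ≤ ENNReal.ofReal (4 ^ 9 * exp (-c ^ 2 / 2)) := by
  by_cases hlarge : log 4 ≤ c ^ 2 * (9 / 8 - 1) / 2
  · calc P {ω | ¬ DyadicIncrementsLE (B · ω) fun n ↦ c * (3 / 4) ^ n}
        ≤ ∑' n : ℕ, ENNReal.ofReal (2 ^ (n + 1) * exp (-(c ^ 2 * (9 / 8) ^ n) / 2)) := by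
          refine (hB.measure_not_dyadicIncrementsLE_le fun n ↦ by positivity).trans_eq
            (tsum_congr fun n ↦ ?_)
          rw [mul_pow, mul_assoc, ← pow_mul, mul_comm n 2, pow_mul, ← mul_pow]
          norm_num
      _ ≤ ENNReal.ofReal (4 * exp (-c ^ 2 / 2)) :=
          tsum_ofReal_two_pow_succ_mul_exp_le (by norm_num) hlarge
      _ ≤ ENNReal.ofReal (4 ^ 9 * exp (-c ^ 2 / 2)) := by gcongr; norm_num
  · have hsmall : exp (c ^ 2 / 2) ≤ 4 ^ 9 := by
      calc exp (c ^ 2 / 2) ≤ exp (9 * log 4) :=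
            exp_le_exp.2 (by linarith [log_pos (by norm_num : (1 : ℝ) < 4)])
        _ = 4 ^ 9 := by rw [← exp_log (by norm_num : (0 : ℝ) < 4), ← exp_nat_mul]; norm_num
    refine prob_le_one.trans (ENNReal.one_le_ofReal.2 ?_)
    have hone : exp (c ^ 2 / 2) * exp (-c ^ 2 / 2) = 1 := by
      rw [← exp_add]; ring_nf; exact exp_zero
    nlinarith [exp_pos (-c ^ 2 / 2)]

theorem exists_tail_bound_quarterHolderSeminorm [IsProbabilityMeasure P]
    (hB : HasStandardGaussianIncrements B P)
    (hcont : ∀ᵐ ω ∂P, ContinuousOn (B · ω) (Icc 0 1)) :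
    ∃ C₁ C₂ : ℝ, 0 < C₁ ∧ 0 < C₂ ∧ ∀ lam, 0 < lam → ∃ U, MeasurableSet U ∧
      {ω | lam < quarterHolderSeminorm (B · ω)} ⊆ U ∧
      P U ≤ ENNReal.ofReal (C₁ * exp (-lam ^ 2 / (2 * C₂))) := by
  set K : ℝ := 2 ^ (1 / 4 : ℝ) * 7
  have hK : 0 < K := by positivity
  refine ⟨4 ^ 9, K ^ 2, by norm_num, by positivity, fun lam hlam ↦ ?_⟩
  set c := lam / K
  set bad := {ω | ¬ ContinuousOn (B · ω) (Icc 0 1)} ∪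
    {ω | ¬ DyadicIncrementsLE (B · ω) fun n ↦ c * (3 / 4) ^ n}
  refine ⟨toMeasurable P bad, measurableSet_toMeasurable _ _,
    fun ω hω ↦ subset_toMeasurable _ _ ?_, ?_⟩
  · by_contra hgood
    simp only [bad, mem_union, mem_ofPred_eq, not_or, not_not] at hgood
    have hle := hgood.2.quarterHolderSeminorm_le hgood.1
    rw [mem_ofPred_eq, ← mul_div_cancel₀ lam hK.ne'] at hω
    exact hle.not_gt hω
  · rw [measure_toMeasurable]
    calc P bad ≤ 0 + ENNReal.ofReal (4 ^ 9 * exp (-c ^ 2 / 2)) :=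
          (measure_union_le _ _).trans (add_le_add (ae_iff.1 hcont).le
            (hB.measure_not_dyadicIncrementsLE_geometric_le (by positivity)))
      _ = ENNReal.ofReal (4 ^ 9 * exp (-lam ^ 2 / (2 * K ^ 2))) := by
          rw [zero_add, div_pow]
          congr 3
          ring

end HasStandardGaussianIncrements

lemma lintegral_exp_lt_top_of_tail [IsFiniteMeasure P] {X : Ω → ℝ} {C₁ C₂ : ℝ}
    (hC₁ : 0 ≤ C₁) (hC₂ : 0 < C₂)
    (h : ∀ lam, 0 < lam → ∃ U, MeasurableSet U ∧ {ω | lam < X ω} ⊆ U ∧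
      P U ≤ ENNReal.ofReal (C₁ * exp (-lam ^ 2 / (2 * C₂)))) :
    ∫⁻ ω, ENNReal.ofReal (exp (X ω)) ∂P < ⊤ := by
  choose U hU_meas hU_sub hU_le using fun m : ℕ ↦ h (m + 1) (by positivity)
  calc ∫⁻ ω, ENNReal.ofReal (exp (X ω)) ∂P
      ≤ ∫⁻ ω, (ENNReal.ofReal (exp 1) +
          ∑' m : ℕ, (U m).indicator (fun _ ↦ ENNReal.ofReal (exp (m + 2))) ω) ∂P :=
        lintegral_mono (ofReal_exp_le_add_tsum_indicator hU_sub)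
    _ = ENNReal.ofReal (exp 1) * P univ + ∑' m : ℕ, ENNReal.ofReal (exp (m + 2)) * P (U m) := by
        rw [lintegral_add_left measurable_const, lintegral_const,
          lintegral_tsum fun m ↦ (measurable_const.indicator (hU_meas m)).aemeasurable]
        simp_rw [lintegral_indicator_const (hU_meas _)]
    _ ≤ ENNReal.ofReal (exp 1) * P univ + ∑' m : ℕ,
          ENNReal.ofReal (C₁ * (exp (m + 2) * exp (-(m + 1 : ℝ) ^ 2 / (2 * C₂)))) := by
        gcongr with m
        rw [mul_left_comm, ENNReal.ofReal_mul (exp_pos _).le]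
        gcongr
        exact hU_le m
    _ < ⊤ := by
        rw [← ENNReal.ofReal_tsum_of_nonneg (fun m ↦ by positivity)
          ((summable_exp_add_two_mul_exp_neg_sq hC₂).mul_left C₁)]
        exact ENNReal.add_lt_top.2
          ⟨ENNReal.mul_lt_top ENNReal.ofReal_lt_top (measure_lt_top _ _), ENNReal.ofReal_lt_top⟩

end GaussianIncrements

theorem brownian_quarter_holder_tail_bound_general {Ω : Type*} [MeasurableSpace Ω]
    (P : Measure Ω) [IsProbabilityMeasure P] (B : ℝ → Ω → ℝ)
    (hcont : ∀ᵐ ω ∂P, ContinuousOn (fun t => B t ω) (Set.Icc 0 1))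
    (hgauss : ∀ s t : ℝ, 0 ≤ s → s ≤ t → t ≤ 1 →
      P.map (fun ω => B t ω - B s ω)
        = ProbabilityTheory.gaussianReal 0 (Real.toNNReal (t - s))) :
    ∃ C₁ C₂ : ℝ, 0 < C₁ ∧ 0 < C₂ ∧
      (∀ lam : ℝ, 0 < lam →
        P {ω | lam < quarterHolderSeminorm fun t => B t ω}
          ≤ ENNReal.ofReal (C₁ * Real.exp (-lam ^ 2 / (2 * C₂)))) ∧
      (∫⁻ ω, ENNReal.ofReal (Real.exp (quarterHolderSeminorm fun t => B t ω)) ∂P) < ⊤ := by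
  obtain ⟨C₁, C₂, hC₁, hC₂, htail⟩ :=
    HasStandardGaussianIncrements.exists_tail_bound_quarterHolderSeminorm hgauss hcont
  refine ⟨C₁, C₂, hC₁, hC₂, fun lam hlam ↦ ?_,
    lintegral_exp_lt_top_of_tail hC₁.le hC₂ htail⟩
  obtain ⟨U, -, hsub, hU⟩ := htail lam hlam
  exact (measure_mono hsub).trans hU

/-- Gaussian tail bound for the `1/4`-Hölder seminorm of Brownian motion on `[0,1]`
(Borell's inequality), and the resulting finiteness of `E[exp(‖ω*‖)]`.  Brownian motion is
characterized by: `B 0 = 0`, a.s. continuous paths on `[0,1]`, independent increments, and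
Gaussian increments `B t - B s ~ N(0, t-s)`. -/
theorem brownian_quarter_holder_tail_bound {Ω : Type*} [MeasurableSpace Ω]
    (P : Measure Ω) [IsProbabilityMeasure P] (B : ℝ → Ω → ℝ)
    (hmeas : ∀ t : ℝ, Measurable (B t))
    (h0 : ∀ ω, B 0 ω = 0)
    (hcont : ∀ᵐ ω ∂P, ContinuousOn (fun t => B t ω) (Set.Icc 0 1))
    (hindep : ∀ (n : ℕ) (t : Fin (n + 1) → ℝ), Monotone t →
      (∀ i, t i ∈ Set.Icc (0 : ℝ) 1) →
      ProbabilityTheory.iIndepFun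
        (fun (i : Fin n) ω => B (t i.succ) ω - B (t i.castSucc) ω) P)
    (hgauss : ∀ s t : ℝ, 0 ≤ s → s ≤ t → t ≤ 1 →
      P.map (fun ω => B t ω - B s ω)
        = ProbabilityTheory.gaussianReal 0 (Real.toNNReal (t - s))) :
    ∃ C₁ C₂ : ℝ, 0 < C₁ ∧ 0 < C₂ ∧
      (∀ lam : ℝ, 0 < lam →
        P {ω | lam < quarterHolderSeminorm fun t => B t ω}
          ≤ ENNReal.ofReal (C₁ * Real.exp (-lam ^ 2 / (2 * C₂)))) ∧
      (∫⁻ ω, ENNReal.ofReal (Real.exp (quarterHolderSeminorm fun t => B t ω)) ∂P) < ⊤ :=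
  brownian_quarter_holder_tail_bound_general P B hcont hgauss
end
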